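/- Stability of the merged multi-element advection scheme with artificial dissipation (Propositions 4 and 7): let P = P^L ⊕ₘ P^R, Q = Q^L ⊕ₘ Q^R and K = K^L ⊕ₘ K^R be the merged (2p+1)×(2p+1) matrices. If U : ℝ → ℝ^{2p+1} is differentiable and satisfies P U′(t) + a Q U(t) + a K U(t) = −a·e₀·U₀(t) for all t ≥ 0 (SAT inflow penalty σ₀ = −1), then the energy t ↦ U(t)ᵀ P U(t) is nonincreasing on [0, ∞). -/

import Mathlib

open Matrix

/-- The boundary matrix `B⁽ⁿ⁾`: `(0,0)` entry `−1`, `(n,n)` entry `1`, all other entries `0`. -/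
def Bmat (n : ℕ) : Matrix (Fin (n+1)) (Fin (n+1)) ℝ :=
  Matrix.of fun i j =>
    if i = j ∧ i = Fin.last n then 1 else if i = j ∧ i = 0 then -1 else 0

/-- The merged `(2p+1)×(2p+1)` matrix `A = Aᴸ ⊕ₘ Aᴿ` built from two `(p+1)×(p+1)` element
matrices sharing the interface node `p`. -/
def merge {p : ℕ} (AL AR : Matrix (Fin (p+1)) (Fin (p+1)) ℝ) :
    Matrix (Fin (2*p+1)) (Fin (2*p+1)) ℝ :=
  Matrix.of fun i j =>
    (if h : (i : ℕ) ≤ p ∧ (j : ℕ) ≤ p then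
        AL ⟨i, by omega⟩ ⟨j, by omega⟩ else 0)
    + (if h : p ≤ (i : ℕ) ∧ p ≤ (j : ℕ) then
        AR ⟨(i : ℕ) - p, by have := i.isLt; omega⟩ ⟨(j : ℕ) - p, by have := j.isLt; omega⟩
      else 0)

/-!
Along a solution, `d/dt (uᵀ P u) = 2 uᵀ P u' = -2a u₀² - 2a uᵀ Q u - 2a uᵀ K u`. Each element is
SBP, so `2 uᵀ Q u` telescopes over the two elements to `u_{2p}² - u₀²`, and the rate equals
`-a (u₀² + u_{2p}²) - 2a uᵀ K u ≤ 0`.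
-/

open Function

section DotProduct

variable {ι κ : Type*} [Fintype ι] [Fintype κ]

lemma dotProduct_mulVec_eq_submatrix (e : ι → κ) (he : Injective e) (A : Matrix κ κ ℝ)
    (hA : ∀ i j, i ∉ Set.range e ∨ j ∉ Set.range e → A i j = 0) (v w : κ → ℝ) :
    v ⬝ᵥ A *ᵥ w = (v ∘ e) ⬝ᵥ A.submatrix e e *ᵥ (w ∘ e) := by
  simp only [dotProduct, mulVec, Function.comp_apply, submatrix_apply]
  refine (Fintype.sum_of_injective e he _ _ (fun k hk => ?_) fun i => ?_).symm
  · simp [hA k _ (Or.inl hk)]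
  · congr 1
    exact Fintype.sum_of_injective e he _ _ (fun l hl => by simp [hA _ l (Or.inr hl)])
      fun _ => rfl

lemma two_mul_dotProduct_mulVec_self (A : Matrix ι ι ℝ) (v : ι → ℝ) :
    2 * (v ⬝ᵥ A *ᵥ v) = v ⬝ᵥ (A + Aᵀ) *ᵥ v := by
  rw [add_mulVec, dotProduct_add, mulVec_transpose, dotProduct_comm v (v ᵥ* A),
    ← dotProduct_mulVec]
  ring

lemma dotProduct_mulVec_comm_of_transpose_eq {A : Matrix ι ι ℝ} (hA : Aᵀ = A) (v w : ι → ℝ) :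
    v ⬝ᵥ A *ᵥ w = w ⬝ᵥ A *ᵥ v := by
  rw [dotProduct_mulVec, ← mulVec_transpose, hA, dotProduct_comm]

end DotProduct

section Derivative

variable {ι : Type*} [Fintype ι] {f g : ℝ → ι → ℝ} {f' g' : ι → ℝ} {t : ℝ}

lemma HasDerivAt.dotProduct (hf : HasDerivAt f f' t) (hg : HasDerivAt g g' t) :
    HasDerivAt (fun s => f s ⬝ᵥ g s) (f' ⬝ᵥ g t + f t ⬝ᵥ g') t := by
  simp only [_root_.dotProduct, ← Finset.sum_add_distrib]
  exact HasDerivAt.fun_sum fun i _ =>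
    (hasDerivAt_pi.mp hf i).mul (hasDerivAt_pi.mp hg i)

lemma HasDerivAt.mulVec (M : Matrix ι ι ℝ) (hf : HasDerivAt f f' t) :
    HasDerivAt (fun s => M *ᵥ f s) (M *ᵥ f') t :=
  hasDerivAt_pi.mpr fun i => by
    have h := (hasDerivAt_const t (M i)).dotProduct hf
    rw [zero_dotProduct, zero_add] at h
    exact h

lemma HasDerivAt.dotProduct_mulVec_self {M : Matrix ι ι ℝ} (hM : Mᵀ = M)
    (hf : HasDerivAt f f' t) :
    HasDerivAt (fun s => f s ⬝ᵥ M *ᵥ f s) (2 * (f t ⬝ᵥ M *ᵥ f')) t := by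
  convert hf.dotProduct (hf.mulVec M) using 1
  rw [dotProduct_mulVec_comm_of_transpose_eq hM f']
  ring

end Derivative

lemma Bmat_eq_diagonal {n : ℕ} (hn : 1 ≤ n) :
    Bmat n = diagonal (Pi.single (Fin.last n) 1 - Pi.single 0 1) := by
  have hlast : Fin.last n ≠ 0 := by rw [Ne, Fin.ext_iff, Fin.val_last, Fin.val_zero]; omega
  ext i j
  by_cases hij : i = j
  · subst hij
    by_cases hi : i = Fin.last n
    · subst hi; simp [Bmat, hlast]
    · by_cases h0 : i = 0
      · subst h0; simp [Bmat, hlast.symm]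
      · simp [Bmat, hi, h0]
  · simp [Bmat, hij]

lemma dotProduct_Bmat_mulVec {n : ℕ} (hn : 1 ≤ n) (v : Fin (n+1) → ℝ) :
    v ⬝ᵥ Bmat n *ᵥ v = v (Fin.last n) ^ 2 - v 0 ^ 2 := by
  simp only [dotProduct, Bmat_eq_diagonal hn, mulVec_diagonal, Pi.sub_apply, Pi.single_apply,
    sub_mul, mul_sub, ite_mul, mul_ite, one_mul, zero_mul, mul_zero, Finset.sum_sub_distrib,
    Finset.sum_ite_eq', Finset.mem_univ, ↓reduceIte]
  ring

section Merge

variable {p : ℕ}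

def leftNode (p : ℕ) (i : Fin (p+1)) : Fin (2*p+1) := ⟨i, by omega⟩

def rightNode (p : ℕ) (i : Fin (p+1)) : Fin (2*p+1) := ⟨i + p, by omega⟩

lemma leftNode_injective : Injective (leftNode p) := fun i j h => by
  simpa [leftNode, Fin.ext_iff] using h

lemma rightNode_injective : Injective (rightNode p) := fun i j h => by
  simpa [rightNode, Fin.ext_iff] using h

@[simp] lemma leftNode_zero : leftNode p 0 = 0 := rfl

@[simp] lemma leftNode_last : leftNode p (Fin.last p) = rightNode p 0 :=
  Fin.ext (by simp [leftNode, rightNode])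

@[simp] lemma rightNode_last : rightNode p (Fin.last p) = Fin.last (2*p) :=
  Fin.ext (by simp only [rightNode, Fin.val_last]; omega)

lemma mem_range_leftNode {i : Fin (2*p+1)} : i ∈ Set.range (leftNode p) ↔ (i : ℕ) ≤ p :=
  ⟨by rintro ⟨j, rfl⟩; exact Nat.le_of_lt_succ j.isLt,
    fun h => ⟨⟨i, by omega⟩, rfl⟩⟩

lemma mem_range_rightNode {i : Fin (2*p+1)} : i ∈ Set.range (rightNode p) ↔ p ≤ (i : ℕ) :=
  ⟨by rintro ⟨j, rfl⟩; exact Nat.le_add_left p j,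
    fun h => ⟨⟨i - p, by omega⟩, Fin.ext (by simp only [rightNode]; omega)⟩⟩

lemma dotProduct_merge_mulVec (AL AR : Matrix (Fin (p+1)) (Fin (p+1)) ℝ) (v : Fin (2*p+1) → ℝ) :
    v ⬝ᵥ merge AL AR *ᵥ v
      = (v ∘ leftNode p) ⬝ᵥ AL *ᵥ (v ∘ leftNode p)
        + (v ∘ rightNode p) ⬝ᵥ AR *ᵥ (v ∘ rightNode p) := by
  set L : Matrix (Fin (2*p+1)) (Fin (2*p+1)) ℝ := of fun i j =>
    if h : (i : ℕ) ≤ p ∧ (j : ℕ) ≤ p then AL ⟨i, by omega⟩ ⟨j, by omega⟩ else 0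
  set R : Matrix (Fin (2*p+1)) (Fin (2*p+1)) ℝ := of fun i j =>
    if h : p ≤ (i : ℕ) ∧ p ≤ (j : ℕ) then
      AR ⟨(i : ℕ) - p, by have := i.isLt; omega⟩ ⟨(j : ℕ) - p, by have := j.isLt; omega⟩
    else 0
  have hLR : merge AL AR = L + R := rfl
  have hL : L.submatrix (leftNode p) (leftNode p) = AL := by
    ext i j
    simp [L, leftNode, Nat.le_of_lt_succ i.isLt, Nat.le_of_lt_succ j.isLt]
  have hR : R.submatrix (rightNode p) (rightNode p) = AR := by
    ext i j
    simp [R, rightNode]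
  rw [hLR, add_mulVec, dotProduct_add,
    dotProduct_mulVec_eq_submatrix _ leftNode_injective, hL,
    dotProduct_mulVec_eq_submatrix _ rightNode_injective, hR]
  · intro i j h
    rw [mem_range_rightNode, mem_range_rightNode] at h
    exact dif_neg (not_and_or.mpr h)
  · intro i j h
    rw [mem_range_leftNode, mem_range_leftNode] at h
    exact dif_neg (not_and_or.mpr h)

lemma merge_transpose (AL AR : Matrix (Fin (p+1)) (Fin (p+1)) ℝ) :
    (merge AL AR)ᵀ = merge ALᵀ ARᵀ := by
  ext i j
  simp only [transpose_apply, merge, of_apply, and_comm]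

lemma two_mul_dotProduct_merge_mulVec_of_sbp (hp : 1 ≤ p)
    {QL QR : Matrix (Fin (p+1)) (Fin (p+1)) ℝ} (hQL : QL + QLᵀ = Bmat p)
    (hQR : QR + QRᵀ = Bmat p) (v : Fin (2*p+1) → ℝ) :
    2 * (v ⬝ᵥ merge QL QR *ᵥ v) = v (Fin.last (2*p)) ^ 2 - v 0 ^ 2 := by
  rw [dotProduct_merge_mulVec, mul_add, two_mul_dotProduct_mulVec_self,
    two_mul_dotProduct_mulVec_self, hQL, hQR, dotProduct_Bmat_mulVec hp,
    dotProduct_Bmat_mulVec hp]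
  -- the interface node contributes `+v_p²` from the left element and `-v_p²` from the right one
  simp only [Function.comp_apply, leftNode_zero, leftNode_last, rightNode_last]
  ring

end Merge

lemma dotProduct_mulVec_nonpos_of_inflow {ι : Type*} [Fintype ι] [DecidableEq ι]
    {P Q K : Matrix ι ι ℝ} {a : ℝ} (ha : 0 ≤ a) {i₀ : ι} {u u' : ι → ℝ}
    (hQ : -(u i₀ ^ 2) ≤ 2 * (u ⬝ᵥ Q *ᵥ u)) (hK : 0 ≤ u ⬝ᵥ K *ᵥ u)
    (h : P *ᵥ u' + a • Q *ᵥ u + a • K *ᵥ u = (-(a * u i₀)) • Pi.single i₀ 1) :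
    u ⬝ᵥ P *ᵥ u' ≤ 0 := by
  have hPu' : P *ᵥ u' = (-(a * u i₀)) • Pi.single i₀ 1 - a • Q *ᵥ u - a • K *ᵥ u := by
    rw [← h]; abel
  have hrate : u ⬝ᵥ P *ᵥ u' = -(a * u i₀ ^ 2) - a * (u ⬝ᵥ Q *ᵥ u) - a * (u ⬝ᵥ K *ᵥ u) := by
    simp only [hPu', neg_smul, dotProduct_sub, dotProduct_neg, dotProduct_smul,
      dotProduct_single, mul_one, smul_eq_mul]
    ring
  nlinarith [mul_nonneg ha hK, mul_nonneg ha (sq_nonneg (u i₀)),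
    mul_nonneg ha (neg_le_iff_add_nonneg.mp hQ)]

theorem stmt9_general (p : ℕ) (hp : 1 ≤ p) (a : ℝ) (ha : 0 ≤ a)
    (dL dR : Fin (p+1) → ℝ)
    (PL PR QL QR KL KR : Matrix (Fin (p+1)) (Fin (p+1)) ℝ)
    (hPL : PL = Matrix.diagonal dL) (hPR : PR = Matrix.diagonal dR)
    (hQL : QL + QLᵀ = Bmat p) (hQR : QR + QRᵀ = Bmat p)
    (hKL : ∀ v : Fin (p+1) → ℝ, 0 ≤ v ⬝ᵥ KL.mulVec v)
    (hKR : ∀ v : Fin (p+1) → ℝ, 0 ≤ v ⬝ᵥ KR.mulVec v)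
    (P Q K : Matrix (Fin (2*p+1)) (Fin (2*p+1)) ℝ)
    (hP : P = merge PL PR) (hQ : Q = merge QL QR) (hK : K = merge KL KR)
    (U : ℝ → Fin (2*p+1) → ℝ) (hU : Differentiable ℝ U)
    (hode : ∀ t : ℝ, 0 ≤ t →
      P.mulVec (deriv U t) + a • Q.mulVec (U t) + a • K.mulVec (U t)
        = (-(a * U t 0)) • (Pi.single 0 1 : Fin (2*p+1) → ℝ)) :
    AntitoneOn (fun t => U t ⬝ᵥ P.mulVec (U t)) (Set.Ici (0:ℝ)) := by
  have hPsymm : Pᵀ = P := by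
    rw [hP, merge_transpose, hPL, hPR, diagonal_transpose, diagonal_transpose]
  have henergy (t : ℝ) := (hU t).hasDerivAt.dotProduct_mulVec_self hPsymm
  refine antitoneOn_of_hasDerivWithinAt_nonpos (convex_Ici 0)
    (fun t _ => (henergy t).continuousAt.continuousWithinAt)
    (fun t _ => (henergy t).hasDerivWithinAt) fun t ht => ?_
  have hQu : -(U t 0 ^ 2) ≤ 2 * (U t ⬝ᵥ Q *ᵥ U t) := by
    rw [hQ, two_mul_dotProduct_merge_mulVec_of_sbp hp hQL hQR]
    linarith [sq_nonneg (U t (Fin.last (2*p)))]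
  have hKu : 0 ≤ U t ⬝ᵥ K *ᵥ U t := by
    rw [hK, dotProduct_merge_mulVec]
    exact add_nonneg (hKL _) (hKR _)
  rw [interior_Ici, Set.mem_Ioi] at ht
  linarith [dotProduct_mulVec_nonpos_of_inflow ha hQu hKu (hode t ht.le)]

/-- **Propositions 4 and 7.** Stability of the merged multi-element advection
scheme with artificial dissipation: with `P = Pᴸ ⊕ₘ Pᴿ`, `Q = Qᴸ ⊕ₘ Qᴿ`, `K = Kᴸ ⊕ₘ Kᴿ`
(`Pᴸ, Pᴿ` diagonal positive, `Qᴸ, Qᴿ` SBP, `Kᴸ, Kᴿ` positive semidefinite), if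
`P U′ + a Q U + a K U = −a U₀ e₀`, then `t ↦ U(t)ᵀ P U(t)` is nonincreasing on `[0,∞)`. -/
theorem stmt9 (p : ℕ) (hp : 1 ≤ p) (a : ℝ) (ha : 0 ≤ a)
    (dL dR : Fin (p+1) → ℝ) (hdL : ∀ i, 0 < dL i) (hdR : ∀ i, 0 < dR i)
    (PL PR QL QR KL KR : Matrix (Fin (p+1)) (Fin (p+1)) ℝ)
    (hPL : PL = Matrix.diagonal dL) (hPR : PR = Matrix.diagonal dR)
    (hQL : QL + QLᵀ = Bmat p) (hQR : QR + QRᵀ = Bmat p)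
    (hKL : ∀ v : Fin (p+1) → ℝ, 0 ≤ v ⬝ᵥ KL.mulVec v)
    (hKR : ∀ v : Fin (p+1) → ℝ, 0 ≤ v ⬝ᵥ KR.mulVec v)
    (P Q K : Matrix (Fin (2*p+1)) (Fin (2*p+1)) ℝ)
    (hP : P = merge PL PR) (hQ : Q = merge QL QR) (hK : K = merge KL KR)
    (U : ℝ → Fin (2*p+1) → ℝ) (hU : Differentiable ℝ U)
    (hode : ∀ t : ℝ, 0 ≤ t →
      P.mulVec (deriv U t) + a • Q.mulVec (U t) + a • K.mulVec (U t)
        = (-(a * U t 0)) • (Pi.single 0 1 : Fin (2*p+1) → ℝ)) :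
    AntitoneOn (fun t => U t ⬝ᵥ P.mulVec (U t)) (Set.Ici (0:ℝ)) :=
  stmt9_general p hp a ha dL dR PL PR QL QR KL KR hPL hPR hQL hQR hKL hKR P Q K hP hQ hK U hU hode
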